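/- arXiv:1411.2065 — 3 statements merged into one kernel-verified Lean document; each statement's English description precedes it below -/
import Mathlib

section
/- Let q : ℝ² → ℂ be a smooth solution of the NLS and E a frame of q with det E(x,t,λ) = 1 for all (x,t,λ). Let α = (∂E/∂λ)·E⁻¹ evaluated at λ = 0. Then α takes values in su(2), ⟨α_x,α_x⟩ = 1 everywhere, and α_t = (1/4)[α_x, α_xx]; that is, under the identification su(2) ≅ ℝ³, α is a solution of the VFE parametrized by arc length. Moreover, writing q = q₁ + i q₂ and φ(x,t) = E(x,t,0), the map g = Ad(φ)[δ] : ℝ² → SO(3) has first column α_x and satisfies g⁻¹ ∂g/∂x = [[0,-2q₁,-2q₂],[2q₁,0,0],[2q₂,0,0]]. -/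
open Matrix Complex

noncomputable section

attribute [local instance] Matrix.normedAddCommGroup Matrix.normedSpace

/-- Partial derivative in the first (space) variable. -/
def pdx {V : Type*} [NormedAddCommGroup V] [NormedSpace ℝ V] (f : ℝ → ℝ → V) : ℝ → ℝ → V :=
  fun x t => deriv (fun s => f s t) x

/-- Partial derivative in the second (time) variable. -/
def pdt {V : Type*} [NormedAddCommGroup V] [NormedSpace ℝ V] (f : ℝ → ℝ → V) : ℝ → ℝ → V :=
  fun x t => deriv (fun s => f x s) t

/-- Smoothness of a map of two real variables. -/
def Smooth2 {V : Type*} [NormedAddCommGroup V] [NormedSpace ℝ V] (f : ℝ → ℝ → V) : Prop :=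
  ContDiff ℝ (⊤ : ℕ∞) (fun p : ℝ × ℝ => f p.1 p.2)

/-- The focusing nonlinear Schrödinger equation `q_t = (i/2)(q_xx + 2|q|²q)`. -/
def IsSolNLS (q : ℝ → ℝ → ℂ) : Prop :=
  Smooth2 q ∧ ∀ x t, pdt q x t =
    (Complex.I / 2) * (pdx (pdx q) x t + 2 * (Complex.normSq (q x t) : ℂ) * q x t)

/-- `a = diag(i, -i)`. -/
def Ma : Matrix (Fin 2) (Fin 2) ℂ := !![Complex.I, 0; 0, -Complex.I]

/-- `b = [[0,1],[-1,0]]`. -/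
def Mb : Matrix (Fin 2) (Fin 2) ℂ := !![0, 1; -1, 0]

/-- `c = [[0,i],[i,0]]`. -/
def Mc : Matrix (Fin 2) (Fin 2) ℂ := !![0, Complex.I; Complex.I, 0]

/-- `u = [[0,q],[-q̄,0]]`. -/
def Mu (z : ℂ) : Matrix (Fin 2) (Fin 2) ℂ := !![0, z; -(starRingEnd ℂ z), 0]

/-- `Q₋₁(u) = (i/2)[[-|q|², q_x],[q̄_x, |q|²]]`, where `z = q` and `w = q_x`. -/
def Qm1 (z w : ℂ) : Matrix (Fin 2) (Fin 2) ℂ :=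
  (Complex.I / 2) • !![-(Complex.normSq z : ℂ), w; starRingEnd ℂ w, (Complex.normSq z : ℂ)]

/-- A frame of a solution `q` of the NLS: smooth in `(x,t)`, holomorphic in `λ`,
solving `E⁻¹E_x = aλ + u`, `E⁻¹E_t = aλ² + uλ + Q₋₁(u)`, and satisfying the
SU(2)-reality condition `E(x,t,λ̄)* E(x,t,λ) = I`. -/
structure IsFrame (q : ℝ → ℝ → ℂ) (E : ℝ → ℝ → ℂ → Matrix (Fin 2) (Fin 2) ℂ) : Prop where
  smooth : ContDiff ℝ (⊤ : ℕ∞) (fun p : ℝ × ℝ × ℂ => E p.1 p.2.1 p.2.2)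
  holo : ∀ x t, Differentiable ℂ (E x t)
  lax_x : ∀ x t l, pdx (fun x t => E x t l) x t = E x t l * (l • Ma + Mu (q x t))
  lax_t : ∀ x t l, pdt (fun x t => E x t l) x t =
      E x t l * ((l ^ 2) • Ma + l • Mu (q x t) + Qm1 (q x t) (pdx q x t))
  reality : ∀ x t l, (E x t (starRingEnd ℂ l))ᴴ * E x t l = 1

/-- Membership in `su(2)`. -/
def IsSU2alg (X : Matrix (Fin 2) (Fin 2) ℂ) : Prop := Xᴴ = -X ∧ X.trace = 0

/-- Membership in `SU(2)`. -/
def IsSU2 (A : Matrix (Fin 2) (Fin 2) ℂ) : Prop := Aᴴ * A = 1 ∧ A.det = 1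

/-- The linear isometry `su(2) ≅ ℝ³` sending `a, -c, b` to the standard basis:
an element `[[ix, y+iz],[-y+iz, -ix]] = x·a + y·b + z·c` goes to `(x, -z, y)`. -/
def toR3 (X : Matrix (Fin 2) (Fin 2) ℂ) : Fin 3 → ℝ := ![(X 0 0).im, -(X 0 1).im, (X 0 1).re]

/-- `Ad(φ)[δ]`: the 3×3 real matrix whose columns are `φaφ⁻¹, -φcφ⁻¹, φbφ⁻¹`
under the identification `su(2) ≅ ℝ³`. -/
def AdDelta (φ : Matrix (Fin 2) (Fin 2) ℂ) : Matrix (Fin 3) (Fin 3) ℝ :=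
  Matrix.of fun j i => ![toR3 (φ * Ma * φ⁻¹), toR3 (-(φ * Mc * φ⁻¹)), toR3 (φ * Mb * φ⁻¹)] i j

/-- The coefficient matrix of a parallel frame with principal curvatures `k₁, k₂`. -/
def K3 (k₁ k₂ : ℝ) : Matrix (Fin 3) (Fin 3) ℝ := !![0, -k₁, -k₂; k₁, 0, 0; k₂, 0, 0]

abbrev M2 := Matrix (Fin 2) (Fin 2) ℂ
abbrev P3 := ℝ × ℝ × ℂ


-- ### infrastructure
lemma hasDerivAt_entries {n m : Type*} [Fintype n] [Fintype m] {R : Type*} [NormedRing R]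
    [NormedSpace ℝ R] {f : ℝ → Matrix n m R} {f' : Matrix n m R} {x : ℝ}
    (h : ∀ i j, HasDerivAt (fun s => f s i j) (f' i j) x) : HasDerivAt f f' x :=
  hasDerivAt_pi.2 fun i => hasDerivAt_pi.2 fun j => h i j

lemma hasDerivAt_entry {n m : Type*} [Fintype n] [Fintype m] {R : Type*} [NormedRing R]
    [NormedSpace ℝ R] {f : ℝ → Matrix n m R} {f' : Matrix n m R} {x : ℝ}
    (h : HasDerivAt f f' x) (i : n) (j : m) : HasDerivAt (fun s => f s i j) (f' i j) x :=
  hasDerivAt_pi.1 (hasDerivAt_pi.1 h i) j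

lemma HasDerivAt.matmul {n : Type*} [Fintype n] {R : Type*} [RCLike R]
    {f g : ℝ → Matrix n n R} {f' g' : Matrix n n R} {x : ℝ}
    (hf : HasDerivAt f f' x) (hg : HasDerivAt g g' x) :
    HasDerivAt (fun s => f s * g s) (f' * g x + f x * g') x := by
  apply hasDerivAt_entries
  intro i j
  simp only [Matrix.mul_apply, Matrix.add_apply]
  have h2 : ∀ k ∈ Finset.univ, HasDerivAt (fun s => f s i k * g s k j)
      (f' i k * g x k j + f x i k * g' k j) x := fun k _ =>
    ((hasDerivAt_entry hf i k).mul (hasDerivAt_entry hg k j))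
  have := HasDerivAt.fun_sum h2
  convert this using 1
  · rfl
  rw [← Finset.sum_add_distrib]

def starCLM : M2 →L[ℝ] M2 :=
  { toFun := fun A => Aᴴ
    map_add' := fun A B => Matrix.conjTranspose_add A B
    map_smul' := fun r A => by
      ext i j
      simp [Matrix.conjTranspose_apply, Complex.real_smul, _root_.map_mul, Complex.conj_ofReal]
  : M2 →ₗ[ℝ] M2}.toContinuousLinearMap

lemma HasDerivAt.matstar {f : ℝ → M2} {f' : M2} {x : ℝ} (hf : HasDerivAt f f' x) :
    HasDerivAt (fun s => (f s)ᴴ) f'ᴴ x :=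
  starCLM.hasFDerivAt.comp_hasDerivAt x hf

lemma hasDerivAt_comp_ofReal_M2 {f : ℂ → M2} {f' : M2} (hf : HasDerivAt f f' 0) :
    HasDerivAt (fun s : ℝ => f (s:ℂ)) f' 0 := by
  have hline : HasDerivAt (fun s : ℝ => (s:ℂ)) (1:ℂ) 0 := by
    simpa using (hasDerivAt_id (0:ℝ)).ofReal_comp
  have hf' := hf.hasFDerivAt.restrictScalars ℝ
  rw [show (0:ℂ) = ((0:ℝ):ℂ) by norm_num] at hf'
  have h := hf'.comp_hasDerivAt (0:ℝ) hline
  exact h.congr_deriv (one_smul ℂ f')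

lemma lineX (x t : ℝ) (l : ℂ) : HasDerivAt (fun s : ℝ => ((s, t, l) : P3)) (1,0,0) x :=
  (hasDerivAt_id x).prodMk (hasDerivAt_const x (t,l))
lemma lineT (x t : ℝ) (l : ℂ) : HasDerivAt (fun s : ℝ => ((x, s, l) : P3)) (0,1,0) t :=
  (hasDerivAt_const t x).prodMk ((hasDerivAt_id t).prodMk (hasDerivAt_const t l))
lemma lineL (x t : ℝ) : HasDerivAt (fun s : ℝ => ((x, t, (s:ℂ)) : P3)) ((0:ℝ),(0:ℝ),(1:ℂ)) 0 := by
  refine (hasDerivAt_const (0:ℝ) x).prodMk ((hasDerivAt_const (0:ℝ) t).prodMk ?_)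
  simpa using (hasDerivAt_id (0:ℝ)).ofReal_comp

lemma hd_line {x t : ℝ} {l : ℂ} {Φ : P3 → M2} (hΦ : DifferentiableAt ℝ Φ ((x,t,l) : P3))
    {γ : ℝ → P3} {v : P3} {s₀ : ℝ} (hγ : HasDerivAt γ v s₀) (hγ0 : γ s₀ = (x,t,l)) :
    HasDerivAt (fun s => Φ (γ s)) (fderiv ℝ Φ (x,t,l) v) s₀ := by
  rw [← hγ0] at hΦ ⊢
  exact hΦ.hasFDerivAt.comp_hasDerivAt s₀ hγ

section Fsec
variable {F : P3 → M2} (hsm : ContDiff ℝ (⊤ : ℕ∞) F)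

include hsm in
lemma diffAt_dirderiv (v : P3) (p : P3) : DifferentiableAt ℝ (fun p => fderiv ℝ F p v) p := by
  have hG := hsm.fderiv_right (m := (⊤ : ℕ∞)) (by simp)
  exact ((ContinuousLinearMap.apply ℝ M2 v).differentiable.comp (hG.differentiable (by simp))) p

include hsm in
lemma swap_dirderiv (p : P3) (v w : P3) :
    fderiv ℝ (fun p => fderiv ℝ F p v) p w = fderiv ℝ (fun p => fderiv ℝ F p w) p v := by
  have hFd := hsm.differentiable (by simp)
  have hG := hsm.fderiv_right (m := (⊤ : ℕ∞)) (by simp)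
  have hGd := hG.differentiable (by simp)
  have hsym := second_derivative_symmetric (f := F) (fun y => (hFd y).hasFDerivAt)
    (hGd p).hasFDerivAt
  have key : ∀ u : P3, fderiv ℝ (fun p => fderiv ℝ F p u) p =
      (ContinuousLinearMap.apply ℝ M2 u).comp (fderiv ℝ (fderiv ℝ F) p) := by
    intro u
    exact ((ContinuousLinearMap.apply ℝ M2 u).hasFDerivAt.comp p (hGd p).hasFDerivAt).fderiv
  rw [key v, key w]
  exact hsym w v
end Fsec

-- ### frame lemmas
section frame
variable {q : ℝ → ℝ → ℂ} {E : ℝ → ℝ → ℂ → M2} (hE : IsFrame q E)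

include hE

lemma frame_fderiv_e1 (p : P3) :
    fderiv ℝ (fun p : P3 => E p.1 p.2.1 p.2.2) p ((1:ℝ),(0:ℝ),(0:ℂ)) =
      E p.1 p.2.1 p.2.2 * (p.2.2 • Ma + Mu (q p.1 p.2.1)) := by
  have h := hd_line ((hE.smooth.differentiable (by simp)) p) (lineX p.1 p.2.1 p.2.2) rfl
  have hl := hE.lax_x p.1 p.2.1 p.2.2
  simp only [pdx] at hl
  exact h.deriv.symm.trans hl

lemma frame_fderiv_e2 (p : P3) :
    fderiv ℝ (fun p : P3 => E p.1 p.2.1 p.2.2) p ((0:ℝ),(1:ℝ),(0:ℂ)) =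
      E p.1 p.2.1 p.2.2 * ((p.2.2 ^ 2) • Ma + p.2.2 • Mu (q p.1 p.2.1)
        + Qm1 (q p.1 p.2.1) (pdx q p.1 p.2.1)) := by
  have h := hd_line ((hE.smooth.differentiable (by simp)) p) (lineT p.1 p.2.1 p.2.2) rfl
  have hl := hE.lax_t p.1 p.2.1 p.2.2
  simp only [pdt] at hl
  exact h.deriv.symm.trans hl

lemma frame_dx (x t : ℝ) (l : ℂ) :
    HasDerivAt (fun s => E s t l) (E x t l * (l • Ma + Mu (q x t))) x := by
  have h := hd_line ((hE.smooth.differentiable (by simp)) (x,t,l)) (lineX x t l) rfl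
  rwa [frame_fderiv_e1 hE (x,t,l)] at h

lemma frame_dt (x t : ℝ) (l : ℂ) :
    HasDerivAt (fun s => E x s l)
      (E x t l * ((l ^ 2) • Ma + l • Mu (q x t) + Qm1 (q x t) (pdx q x t))) t := by
  have h := hd_line ((hE.smooth.differentiable (by simp)) (x,t,l)) (lineT x t l) rfl
  rwa [frame_fderiv_e2 hE (x,t,l)] at h

lemma frame_fderiv_e3 (p : P3) :
    fderiv ℝ (fun p : P3 => E p.1 p.2.1 p.2.2) p ((0:ℝ),(0:ℝ),(1:ℂ)) =
      deriv (E p.1 p.2.1) p.2.2 := by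
  have hFd := hE.smooth.differentiable (by simp)
  set L : ℂ →L[ℝ] P3 :=
    (0 : ℂ →L[ℝ] ℝ).prod ((0 : ℂ →L[ℝ] ℝ).prod (ContinuousLinearMap.id ℝ ℂ)) with hL
  have hline : HasFDerivAt (fun c : ℂ => ((p.1, p.2.1, c) : P3)) L p.2.2 :=
    (hasFDerivAt_const p.1 p.2.2).prodMk ((hasFDerivAt_const p.2.1 p.2.2).prodMk (hasFDerivAt_id p.2.2))
  have h1 : HasFDerivAt (E p.1 p.2.1)
      ((fderiv ℝ (fun p : P3 => E p.1 p.2.1 p.2.2) p).comp L) p.2.2 :=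
    ((hFd p).hasFDerivAt.comp p.2.2 hline :)
  have h2 : HasFDerivAt (E p.1 p.2.1)
      (((1 : ℂ →L[ℂ] ℂ).smulRight (deriv (E p.1 p.2.1) p.2.2)).restrictScalars ℝ) p.2.2 :=
    ((hE.holo p.1 p.2.1 p.2.2).hasDerivAt.hasFDerivAt).restrictScalars ℝ
  have h3 := h1.unique h2
  calc fderiv ℝ (fun p : P3 => E p.1 p.2.1 p.2.2) p ((0:ℝ),(0:ℝ),(1:ℂ))
      = ((fderiv ℝ (fun p : P3 => E p.1 p.2.1 p.2.2) p).comp L) 1 := by simp [hL]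
    _ = (((1 : ℂ →L[ℂ] ℂ).smulRight (deriv (E p.1 p.2.1) p.2.2)).restrictScalars ℝ) 1 := by
        rw [h3]
    _ = deriv (E p.1 p.2.1) p.2.2 := by simp

lemma frame_Dx (x t : ℝ) :
    HasDerivAt (fun s => deriv (E s t) 0)
      (deriv (E x t) 0 * Mu (q x t) + E x t 0 * Ma) x := by
  have hsm := hE.smooth
  have hfun : (fun s : ℝ => deriv (E s t) 0) =
      fun s : ℝ => fderiv ℝ (fun p : P3 => E p.1 p.2.1 p.2.2) (s,t,0) ((0:ℝ),(0:ℝ),(1:ℂ)) :=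
    funext fun s => (frame_fderiv_e3 hE (s,t,0)).symm
  rw [hfun]
  have h1 := hd_line (diffAt_dirderiv hsm ((0:ℝ),(0:ℝ),(1:ℂ)) ((x,t,0) : P3)) (lineX x t 0) rfl
  rw [swap_dirderiv hsm] at h1
  have hA : (fun p : P3 => fderiv ℝ (fun p : P3 => E p.1 p.2.1 p.2.2) p ((1:ℝ),(0:ℝ),(0:ℂ))) =
      fun p : P3 => E p.1 p.2.1 p.2.2 * (p.2.2 • Ma + Mu (q p.1 p.2.1)) :=
    funext fun p => frame_fderiv_e1 hE p
  rw [hA] at h1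
  have hAd : DifferentiableAt ℝ
      (fun p : P3 => E p.1 p.2.1 p.2.2 * (p.2.2 • Ma + Mu (q p.1 p.2.1))) ((x,t,0) : P3) := by
    rw [← hA]; exact diffAt_dirderiv hsm ((1:ℝ),(0:ℝ),(0:ℂ)) _
  have h2 := hd_line hAd (lineL x t) rfl
  have hf : HasDerivAt (fun s : ℝ => E x t (s:ℂ)) (deriv (E x t) 0) 0 := by
    exact hasDerivAt_comp_ofReal_M2 ((hE.holo x t) 0).hasDerivAt
  have hg : HasDerivAt (fun s : ℝ => ((s:ℂ)) • Ma + Mu (q x t)) Ma 0 := by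
    have h4 : (fun s : ℝ => ((s:ℂ)) • Ma + Mu (q x t)) =
        fun s : ℝ => s • Ma + Mu (q x t) := funext fun s => by rw [Complex.coe_smul]
    rw [h4]
    exact (((hasDerivAt_id (0:ℝ)).smul_const Ma).add_const (Mu (q x t))).congr_deriv (one_smul ℝ Ma)
  have h3 := hf.matmul hg
  have h5 := h2.unique h3
  rw [h5] at h1
  simpa using h1

lemma frame_Dt (x t : ℝ) :
    HasDerivAt (fun s => deriv (E x s) 0)
      (deriv (E x t) 0 * Qm1 (q x t) (pdx q x t) + E x t 0 * Mu (q x t)) t := by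
  have hsm := hE.smooth
  have hfun : (fun s : ℝ => deriv (E x s) 0) =
      fun s : ℝ => fderiv ℝ (fun p : P3 => E p.1 p.2.1 p.2.2) (x,s,0) ((0:ℝ),(0:ℝ),(1:ℂ)) :=
    funext fun s => (frame_fderiv_e3 hE (x,s,0)).symm
  rw [hfun]
  have h1 := hd_line (diffAt_dirderiv hsm ((0:ℝ),(0:ℝ),(1:ℂ)) ((x,t,0) : P3)) (lineT x t 0) rfl
  rw [swap_dirderiv hsm] at h1
  have hA : (fun p : P3 => fderiv ℝ (fun p : P3 => E p.1 p.2.1 p.2.2) p ((0:ℝ),(1:ℝ),(0:ℂ))) =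
      fun p : P3 => E p.1 p.2.1 p.2.2 * ((p.2.2 ^ 2) • Ma + p.2.2 • Mu (q p.1 p.2.1)
        + Qm1 (q p.1 p.2.1) (pdx q p.1 p.2.1)) :=
    funext fun p => frame_fderiv_e2 hE p
  rw [hA] at h1
  have hAd : DifferentiableAt ℝ
      (fun p : P3 => E p.1 p.2.1 p.2.2 * ((p.2.2 ^ 2) • Ma + p.2.2 • Mu (q p.1 p.2.1)
        + Qm1 (q p.1 p.2.1) (pdx q p.1 p.2.1))) ((x,t,0) : P3) := by
    rw [← hA]; exact diffAt_dirderiv hsm ((0:ℝ),(1:ℝ),(0:ℂ)) _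
  have h2 := hd_line hAd (lineL x t) rfl
  have hf : HasDerivAt (fun s : ℝ => E x t (s:ℂ)) (deriv (E x t) 0) 0 := by
    exact hasDerivAt_comp_ofReal_M2 ((hE.holo x t) 0).hasDerivAt
  have hg : HasDerivAt (fun s : ℝ => ((s:ℂ))^2 • Ma + (s:ℂ) • Mu (q x t)
      + Qm1 (q x t) (pdx q x t)) (Mu (q x t)) 0 := by
    have h4 : (fun s : ℝ => ((s:ℂ))^2 • Ma + (s:ℂ) • Mu (q x t) + Qm1 (q x t) (pdx q x t)) =
        fun s : ℝ => (s^2 : ℝ) • Ma + s • Mu (q x t) + Qm1 (q x t) (pdx q x t) :=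
      funext fun s => by rw [← Complex.coe_smul, ← Complex.coe_smul]; push_cast; ring_nf
    rw [h4]
    have := (((hasDerivAt_pow 2 (0:ℝ)).smul_const Ma).add
      ((hasDerivAt_id (0:ℝ)).smul_const (Mu (q x t)))).add_const (Qm1 (q x t) (pdx q x t))
    exact this.congr_deriv (by simp)
  have h3 := hf.matmul hg
  have h5 := h2.unique h3
  rw [h5] at h1
  simpa using h1

end frame

-- ### matrix algebra helpers
lemma Mu_star (z : ℂ) : (Mu z)ᴴ = -(Mu z) := by
  ext i j
  fin_cases i <;> fin_cases j <;>
    simp [Mu, Matrix.conjTranspose_apply]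

lemma Qm1_star (z w : ℂ) : (Qm1 z w)ᴴ = -(Qm1 z w) := by
  ext i j
  fin_cases i <;> fin_cases j <;>
    simp [Qm1, Matrix.conjTranspose_apply, Matrix.smul_apply, div_eq_mul_inv,
      Complex.ext_iff] <;> ring

lemma Ma_sq : Ma * Ma = -1 := by
  ext i j
  fin_cases i <;> fin_cases j <;>
    simp [Ma, Matrix.mul_apply, Fin.sum_univ_two]

lemma sandwich (φ A B : M2) (h : φᴴ * φ = 1) :
    (φ * A * φᴴ) * (φ * B * φᴴ) = φ * (A * B) * φᴴ := by
  calc (φ * A * φᴴ) * (φ * B * φᴴ) = φ * (A * ((φᴴ * φ) * (B * φᴴ))) := by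
        simp only [Matrix.mul_assoc]
    _ = φ * (A * B) * φᴴ := by rw [h]; simp only [Matrix.one_mul, Matrix.mul_assoc]


lemma bracket_id (z : ℂ) :
    Ma * (Mu z * Ma - Ma * Mu z) - (Mu z * Ma - Ma * Mu z) * Ma = (4:ℂ) • Mu z := by
  ext i j
  fin_cases i <;> fin_cases j <;>
    simp [Ma, Mu, Matrix.mul_apply, Fin.sum_univ_two, Complex.ext_iff]
  all_goals first
    | (constructor <;> first | trivial | ring)
    | trivial
    | ring

lemma comm_Ma (z : ℂ) :
    Mu z * Ma - Ma * Mu z = (2 * z.re) • (-Mc) + (2 * z.im) • Mb := by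
  ext i j
  fin_cases i <;> fin_cases j <;>
    simp [Ma, Mu, Mb, Mc, Matrix.mul_apply, Fin.sum_univ_two, Complex.real_smul,
      Complex.ext_iff]
  all_goals first
    | (constructor <;> first | trivial | ring)
    | trivial
    | ring

lemma comm_mMc (z : ℂ) :
    Mu z * (-Mc) - (-Mc) * Mu z = (-(2 * z.re)) • Ma := by
  ext i j
  fin_cases i <;> fin_cases j <;>
    simp [Ma, Mu, Mc, Matrix.mul_apply, Fin.sum_univ_two, Complex.real_smul,
      Complex.ext_iff]
  all_goals first
    | (constructor <;> first | trivial | ring)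
    | trivial
    | ring

lemma comm_Mb (z : ℂ) :
    Mu z * Mb - Mb * Mu z = (-(2 * z.im)) • Ma := by
  ext i j
  fin_cases i <;> fin_cases j <;>
    simp [Ma, Mu, Mb, Matrix.mul_apply, Fin.sum_univ_two, Complex.real_smul,
      Complex.ext_iff]
  all_goals first
    | (constructor <;> first | trivial | ring)
    | trivial
    | ring

lemma toR3_add (X Y : M2) (j : Fin 3) : toR3 (X + Y) j = toR3 X j + toR3 Y j := by
  fin_cases j <;> simp [toR3] <;> ring

lemma toR3_smul (r : ℝ) (X : M2) (j : Fin 3) : toR3 (r • X) j = r * toR3 X j := by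
  fin_cases j <;> simp [toR3, Complex.smul_im, Complex.smul_re] <;> ring

-- ### pointwise frame facts
section frame2
variable {q : ℝ → ℝ → ℂ} {E : ℝ → ℝ → ℂ → M2} (hE : IsFrame q E)

include hE

lemma reality0 (x t : ℝ) : (E x t 0)ᴴ * E x t 0 = 1 := by
  simpa using hE.reality x t 0

lemma reality0' (x t : ℝ) : E x t 0 * (E x t 0)ᴴ = 1 :=
  (mul_eq_one_comm).1 (reality0 hE x t)

lemma inv0 (x t : ℝ) : (E x t 0)⁻¹ = (E x t 0)ᴴ :=
  Matrix.inv_eq_left_inv (reality0 hE x t)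

lemma holo_line (x t : ℝ) :
    HasDerivAt (fun s : ℝ => E x t (s:ℂ)) (deriv (E x t) 0) 0 :=
  hasDerivAt_comp_ofReal_M2 ((hE.holo x t) 0).hasDerivAt

lemma Dskew (x t : ℝ) :
    (deriv (E x t) 0)ᴴ * E x t 0 + (E x t 0)ᴴ * deriv (E x t) 0 = 0 := by
  have hf := holo_line hE x t
  have h1 := (hf.matstar).matmul hf
  have h2 : (fun s : ℝ => (E x t (s:ℂ))ᴴ * E x t (s:ℂ)) = fun _ => (1:M2) :=
    funext fun s => by
      have := hE.reality x t (s:ℂ)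
      rwa [Complex.conj_ofReal] at this
  rw [h2] at h1
  have h3 := h1.unique (hasDerivAt_const 0 1)
  simpa using h3

lemma traceD (hdet : ∀ x t l, (E x t l).det = 1) (x t : ℝ) :
    (deriv (E x t) 0 * (E x t 0)ᴴ).trace = 0 := by
  have hf := holo_line hE x t
  have h3 := ((hasDerivAt_entry hf 0 0).mul (hasDerivAt_entry hf 1 1)).sub
    ((hasDerivAt_entry hf 0 1).mul (hasDerivAt_entry hf 1 0))
  have h0 : HasDerivAt (fun s : ℝ =>
      E x t (s:ℂ) 0 0 * E x t (s:ℂ) 1 1 - E x t (s:ℂ) 0 1 * E x t (s:ℂ) 1 0) 0 0 := by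
    have hdet2 : (fun s : ℝ =>
        E x t (s:ℂ) 0 0 * E x t (s:ℂ) 1 1 - E x t (s:ℂ) 0 1 * E x t (s:ℂ) 1 0) =
        fun _ => (1:ℂ) := funext fun s => by
      rw [← Matrix.det_fin_two (E x t (s:ℂ))]; exact hdet x t (s:ℂ)
    rw [hdet2]; exact hasDerivAt_const 0 1
  have hrel := h3.unique h0
  simp only [Complex.ofReal_zero] at hrel
  have hadj : (E x t 0)ᴴ =
      !![E x t 0 1 1, -(E x t 0 0 1); -(E x t 0 1 0), E x t 0 0 0] := by
    rw [← inv0 hE x t, Matrix.inv_def, hdet x t 0, Matrix.adjugate_fin_two]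
    simp
  rw [hadj]
  simp only [Matrix.trace_fin_two, Matrix.mul_apply, Fin.sum_univ_two]
  simp [Matrix.cons_val_zero, Matrix.cons_val_one]
  linear_combination hrel

-- sandwich derivative: d/dx (φ X φᴴ) = φ [u,X] φᴴ
lemma sandwich_deriv (x t : ℝ) (X : M2) :
    HasDerivAt (fun s => E s t 0 * X * (E s t 0)ᴴ)
      (E x t 0 * (Mu (q x t) * X - X * Mu (q x t)) * (E x t 0)ᴴ) x := by
  have hd := frame_dx hE x t 0
  simp only [zero_smul, zero_add] at hd
  have h1 := (hd.matmul (hasDerivAt_const x X)).matmul hd.matstar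
  have hval : (E x t 0 * Mu (q x t) * X + E x t 0 * X * 0) * (E x t 0)ᴴ
      + E x t 0 * X * (E x t 0 * Mu (q x t))ᴴ
      = E x t 0 * (Mu (q x t) * X - X * Mu (q x t)) * (E x t 0)ᴴ := by
    rw [Matrix.conjTranspose_mul, Mu_star]
    noncomm_ring
  rw [← hval]
  convert h1 using 2 <;> noncomm_ring

end frame2


lemma AdDelta_c0 (φ : M2) (j : Fin 3) : AdDelta φ j 0 = toR3 (φ * Ma * φ⁻¹) j := rfl
lemma AdDelta_c1 (φ : M2) (j : Fin 3) : AdDelta φ j 1 = toR3 (-(φ * Mc * φ⁻¹)) j := rfl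
lemma AdDelta_c2 (φ : M2) (j : Fin 3) : AdDelta φ j 2 = toR3 (φ * Mb * φ⁻¹) j := rfl

lemma hasDerivAt_toR3 {f : ℝ → M2} {f' : M2} {x : ℝ} (h : HasDerivAt f f' x) (j : Fin 3) :
    HasDerivAt (fun s => toR3 (f s) j) (toR3 f' j) x := by
  fin_cases j
  · exact Complex.imCLM.hasFDerivAt.comp_hasDerivAt x (hasDerivAt_entry h 0 0)
  · exact (Complex.imCLM.hasFDerivAt.comp_hasDerivAt x (hasDerivAt_entry h 0 1)).neg
  · exact Complex.reCLM.hasFDerivAt.comp_hasDerivAt x (hasDerivAt_entry h 0 1)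

section alpha
variable {q : ℝ → ℝ → ℂ} {E : ℝ → ℝ → ℂ → M2} (hE : IsFrame q E)
  {α : ℝ → ℝ → M2} (hα : ∀ x t, α x t = deriv (fun l => E x t l) 0 * (E x t 0)⁻¹)

include hE hα

lemma alpha_eq (x t : ℝ) : α x t = deriv (E x t) 0 * (E x t 0)ᴴ := by
  rw [hα x t, inv0 hE x t]

lemma alpha_dx (x t : ℝ) :
    HasDerivAt (fun s => α s t) (E x t 0 * Ma * (E x t 0)ᴴ) x := by
  have hfun : (fun s => α s t) = fun s => deriv (E s t) 0 * (E s t 0)ᴴ :=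
    funext fun s => alpha_eq hE hα s t
  rw [hfun]
  have h1 := (frame_Dx hE x t).matmul (frame_dx hE x t 0).matstar
  convert h1 using 1
  simp only [zero_smul, zero_add, Matrix.conjTranspose_mul, Mu_star]
  noncomm_ring

lemma alpha_dt (x t : ℝ) :
    HasDerivAt (fun s => α x s) (E x t 0 * Mu (q x t) * (E x t 0)ᴴ) t := by
  have hfun : (fun s => α x s) = fun s => deriv (E x s) 0 * (E x s 0)ᴴ :=
    funext fun s => alpha_eq hE hα x s
  rw [hfun]
  have h1 := (frame_Dt hE x t).matmul (frame_dt hE x t 0).matstar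
  convert h1 using 1
  simp only [zero_smul, zero_add, ne_eq, OfNat.ofNat_ne_zero, not_false_eq_true,
    zero_pow, Matrix.conjTranspose_mul, Qm1_star]
  noncomm_ring

lemma eq_pdx (x t : ℝ) : pdx α x t = E x t 0 * Ma * (E x t 0)ᴴ :=
  (alpha_dx hE hα x t).deriv

lemma eq_pdt (x t : ℝ) : pdt α x t = E x t 0 * Mu (q x t) * (E x t 0)ᴴ :=
  (alpha_dt hE hα x t).deriv

lemma alpha_dxx (x t : ℝ) :
    HasDerivAt (fun s => pdx α s t)
      (E x t 0 * (Mu (q x t) * Ma - Ma * Mu (q x t)) * (E x t 0)ᴴ) x := by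
  have hfun : (fun s => pdx α s t) = fun s => E s t 0 * Ma * (E s t 0)ᴴ :=
    funext fun s => eq_pdx hE hα s t
  rw [hfun]
  exact sandwich_deriv hE x t Ma

lemma eq_pdxx (x t : ℝ) :
    pdx (pdx α) x t = E x t 0 * (Mu (q x t) * Ma - Ma * Mu (q x t)) * (E x t 0)ᴴ :=
  (alpha_dxx hE hα x t).deriv

end alpha

/-- The Pohlmeyer–Sym construction: `α = (∂E/∂λ)E⁻¹|_{λ=0}` is an su(2)-valued solution
of the VFE parametrized by arc length, and `Ad(φ)[δ]` with `φ = E(·,·,0)` is a p-frame. -/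
theorem statement1 (q : ℝ → ℝ → ℂ) (hq : IsSolNLS q)
    (E : ℝ → ℝ → ℂ → Matrix (Fin 2) (Fin 2) ℂ) (hE : IsFrame q E)
    (hdet : ∀ x t l, (E x t l).det = 1)
    (α : ℝ → ℝ → Matrix (Fin 2) (Fin 2) ℂ)
    (hα : ∀ x t, α x t = deriv (fun l => E x t l) 0 * (E x t 0)⁻¹) :
    (∀ x t, IsSU2alg (α x t)) ∧
    (∀ x t, -(1/2 : ℂ) * (pdx α x t * pdx α x t).trace = 1) ∧
    (∀ x t, pdt α x t =
      (1/4 : ℂ) • (pdx α x t * pdx (pdx α) x t - pdx (pdx α) x t * pdx α x t)) ∧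
    (∀ x t j, AdDelta (E x t 0) j 0 = toR3 (pdx α x t) j) ∧
    (∀ x t, pdx (fun x t => AdDelta (E x t 0)) x t =
      AdDelta (E x t 0) * K3 (2 * (q x t).re) (2 * (q x t).im)) := by
  refine ⟨?_, ?_, ?_, ?_, ?_⟩
  · -- su(2)-valued
    intro x t
    constructor
    · rw [alpha_eq hE hα x t, Matrix.conjTranspose_mul, Matrix.conjTranspose_conjTranspose]
      have h2 : E x t 0 * (deriv (E x t) 0)ᴴ + deriv (E x t) 0 * (E x t 0)ᴴ = 0 := by
        calc E x t 0 * (deriv (E x t) 0)ᴴ + deriv (E x t) 0 * (E x t 0)ᴴ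
            = E x t 0 * (deriv (E x t) 0)ᴴ * (E x t 0 * (E x t 0)ᴴ)
              + (E x t 0 * (E x t 0)ᴴ) * (deriv (E x t) 0 * (E x t 0)ᴴ) := by
              rw [reality0' hE x t]; noncomm_ring
          _ = E x t 0 * ((deriv (E x t) 0)ᴴ * E x t 0 + (E x t 0)ᴴ * deriv (E x t) 0)
              * (E x t 0)ᴴ := by noncomm_ring
          _ = 0 := by rw [Dskew hE x t]; simp
      exact eq_neg_of_add_eq_zero_left h2
    · rw [alpha_eq hE hα x t]
      exact traceD hE hdet x t
  · -- unit speed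
    intro x t
    rw [eq_pdx hE hα x t, sandwich _ _ _ (reality0 hE x t), Ma_sq]
    rw [show E x t 0 * (-1) * (E x t 0)ᴴ = -(E x t 0 * (E x t 0)ᴴ) by noncomm_ring]
    rw [reality0' hE x t]
    simp [Matrix.trace_neg, Matrix.trace_one]
  · -- VFE
    intro x t
    rw [eq_pdt hE hα x t, eq_pdx hE hα x t, eq_pdxx hE hα x t,
      sandwich _ _ _ (reality0 hE x t), sandwich _ _ _ (reality0 hE x t)]
    rw [show E x t 0 * (Ma * (Mu (q x t) * Ma - Ma * Mu (q x t))) * (E x t 0)ᴴ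
        - E x t 0 * ((Mu (q x t) * Ma - Ma * Mu (q x t)) * Ma) * (E x t 0)ᴴ
        = E x t 0 * (Ma * (Mu (q x t) * Ma - Ma * Mu (q x t))
          - (Mu (q x t) * Ma - Ma * Mu (q x t)) * Ma) * (E x t 0)ᴴ by noncomm_ring]
    rw [bracket_id (q x t)]
    rw [mul_smul_comm, smul_mul_assoc, smul_smul]
    norm_num
  · -- first column
    intro x t j
    rw [eq_pdx hE hα x t, ← inv0 hE x t]
    rfl
  · -- p-frame equation
    intro x t
    have hkey : ∀ (X : M2) (j : Fin 3),
        HasDerivAt (fun s => toR3 (E s t 0 * X * (E s t 0)⁻¹) j)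
          (toR3 (E x t 0 * (Mu (q x t) * X - X * Mu (q x t)) * (E x t 0)ᴴ) j) x := by
      intro X j
      have hfun : (fun s => toR3 (E s t 0 * X * (E s t 0)⁻¹) j)
          = fun s => toR3 (E s t 0 * X * (E s t 0)ᴴ) j :=
        funext fun s => by rw [inv0 hE s t]
      rw [hfun]
      exact hasDerivAt_toR3 (sandwich_deriv hE x t X) j
    show deriv (fun s => AdDelta (E s t 0)) x = _
    apply HasDerivAt.deriv
    apply hasDerivAt_entries
    intro j i
    fin_cases i
    · show HasDerivAt (fun s => AdDelta (E s t 0) j 0)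
        ((AdDelta (E x t 0) * K3 (2 * (q x t).re) (2 * (q x t).im)) j 0) x
      have hval : (AdDelta (E x t 0) * K3 (2 * (q x t).re) (2 * (q x t).im)) j 0
          = toR3 (E x t 0 * (Mu (q x t) * Ma - Ma * Mu (q x t)) * (E x t 0)ᴴ) j := by
        rw [comm_Ma, Matrix.mul_apply, Fin.sum_univ_three]
        rw [AdDelta_c0, AdDelta_c1, AdDelta_c2, inv0 hE x t]
        rw [Matrix.mul_add, Matrix.add_mul, mul_smul_comm, mul_smul_comm,
          smul_mul_assoc, smul_mul_assoc, toR3_add, toR3_smul, toR3_smul]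
        rw [show E x t 0 * (-Mc) * (E x t 0)ᴴ = -(E x t 0 * Mc * (E x t 0)ᴴ) by noncomm_ring]
        simp [K3, Matrix.vecHead, Matrix.vecTail]
        try ring
      rw [hval]
      exact hkey Ma j
    · show HasDerivAt (fun s => AdDelta (E s t 0) j 1)
        ((AdDelta (E x t 0) * K3 (2 * (q x t).re) (2 * (q x t).im)) j 1) x
      have hfun1 : (fun s => AdDelta (E s t 0) j 1)
          = fun s => toR3 (E s t 0 * (-Mc) * (E s t 0)⁻¹) j := funext fun s => by
        rw [AdDelta_c1]
        congr 1
        noncomm_ring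
      rw [hfun1]
      have hval : (AdDelta (E x t 0) * K3 (2 * (q x t).re) (2 * (q x t).im)) j 1
          = toR3 (E x t 0 * (Mu (q x t) * (-Mc) - (-Mc) * Mu (q x t)) * (E x t 0)ᴴ) j := by
        rw [comm_mMc, Matrix.mul_apply, Fin.sum_univ_three]
        rw [AdDelta_c0, AdDelta_c1, AdDelta_c2, inv0 hE x t]
        rw [mul_smul_comm, smul_mul_assoc, toR3_smul]
        simp [K3, Matrix.vecHead, Matrix.vecTail]
        try ring
      rw [hval]
      exact hkey (-Mc) j
    · show HasDerivAt (fun s => AdDelta (E s t 0) j 2)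
        ((AdDelta (E x t 0) * K3 (2 * (q x t).re) (2 * (q x t).im)) j 2) x
      have hval : (AdDelta (E x t 0) * K3 (2 * (q x t).re) (2 * (q x t).im)) j 2
          = toR3 (E x t 0 * (Mu (q x t) * Mb - Mb * Mu (q x t)) * (E x t 0)ᴴ) j := by
        rw [comm_Mb, Matrix.mul_apply, Fin.sum_univ_three]
        rw [AdDelta_c0, AdDelta_c1, AdDelta_c2, inv0 hE x t]
        rw [mul_smul_comm, smul_mul_assoc, toR3_smul]
        simp [K3, Matrix.vecHead, Matrix.vecTail]
        try ring
      rw [hval]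
      exact hkey Mb j
end
end

section
/- Let q : ℝ² → ℂ be a smooth solution of the NLS and let E₁, E₂ be two frames of q with det Eᵢ(x,t,λ) = 1 for all (x,t,λ). Let γᵢ = (∂Eᵢ/∂λ)·Eᵢ⁻¹ evaluated at λ = 0 for i = 1,2. Then there exist φ ∈ SU(2) and v ∈ su(2) such that γ₂(x,t) = φ·γ₁(x,t)·φ⁻¹ + v for all (x,t); i.e., under the identification su(2) ≅ ℝ³, γ₂ is obtained from γ₁ by a rigid motion of ℝ³. -/
open Matrix Complex

noncomputable section

attribute [local instance] Matrix.normedAddCommGroup Matrix.normedSpace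

/-! ### Auxiliary lemmas -/

section Aux

local notation "M2" => Matrix (Fin 2) (Fin 2) ℂ

theorem hasDerivAt_matrix {𝕜 : Type*} [NontriviallyNormedField 𝕜] [NormedAlgebra 𝕜 ℂ]
    {f : 𝕜 → M2} {f' : M2} {x : 𝕜} :
    HasDerivAt f f' x ↔ ∀ i j, HasDerivAt (fun y => f y i j) (f' i j) x :=
  ⟨fun h i j => (hasDerivAt_pi.mp ((hasDerivAt_pi (φ := f)).mp h i)) j,
   fun h => hasDerivAt_pi.mpr fun i => hasDerivAt_pi.mpr fun j => h i j⟩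

theorem HasDerivAt.matMul {𝕜 : Type*} [NontriviallyNormedField 𝕜] [NormedAlgebra 𝕜 ℂ]
    {f g : 𝕜 → M2} {f' g' : M2} {x : 𝕜}
    (hf : HasDerivAt f f' x) (hg : HasDerivAt g g' x) :
    HasDerivAt (fun y => f y * g y) (f' * g x + f x * g') x := by
  rw [hasDerivAt_matrix] at hf hg ⊢
  intro i j
  have h : ∀ y, (f y * g y) i j = ∑ k, f y i k * g y k j := fun y => Matrix.mul_apply
  simp only [h, Matrix.add_apply, Matrix.mul_apply]
  rw [← Finset.sum_add_distrib]
  exact HasDerivAt.fun_sum fun k _ => ((hf i k).mul (hg k j))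

theorem HasDerivAt.matCT {f : ℝ → M2} {f' : M2} {x : ℝ}
    (hf : HasDerivAt f f' x) : HasDerivAt (fun y => (f y)ᴴ) f'ᴴ x := by
  rw [hasDerivAt_matrix] at hf ⊢
  intro i j
  simp only [Matrix.conjTranspose_apply]
  exact (Complex.conjCLE.hasFDerivAt.comp_hasDerivAt x (hf j i))

theorem HasDerivAt.matAdj {f : ℂ → M2} {f' : M2} {x : ℂ}
    (hf : HasDerivAt f f' x) : HasDerivAt (fun y => (f y).adjugate) f'.adjugate x := by
  rw [hasDerivAt_matrix] at hf ⊢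
  intro i j
  have h : ∀ (A : M2), A.adjugate = !![A 1 1, -A 0 1; -A 1 0, A 0 0] := Matrix.adjugate_fin_two
  simp only [h]
  fin_cases i <;> fin_cases j <;> simp <;>
    first
      | exact hf 1 1 | exact (hf 0 1).neg | exact (hf 1 0).neg | exact hf 0 0

theorem hasDerivAt_conj_conj {f : ℂ → ℂ} {f' : ℂ} (hf : HasDerivAt f f' 0) :
    HasDerivAt (fun l => (starRingEnd ℂ) (f ((starRingEnd ℂ) l))) ((starRingEnd ℂ) f') 0 := by
  rw [hasDerivAt_iff_tendsto_slope] at hf ⊢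
  have hc : Filter.Tendsto (fun l : ℂ => (starRingEnd ℂ) l)
      (nhdsWithin 0 {(0:ℂ)}ᶜ) (nhdsWithin 0 {(0:ℂ)}ᶜ) := by
    apply Filter.Tendsto.inf
    · simpa using (Complex.continuous_conj.tendsto 0)
    · apply Filter.tendsto_principal_principal.mpr
      intro a ha
      simpa using ha
  have h2 := ((Complex.continuous_conj.tendsto f').comp (hf.comp hc))
  apply h2.congr
  intro l
  simp [slope_def_field, Function.comp, map_div₀]

theorem ct_x (l z : ℂ) : ((starRingEnd ℂ) l • Ma + Mu z)ᴴ = -(l • Ma + Mu z) := by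
  ext i j
  fin_cases i <;> fin_cases j <;>
    simp [Ma, Mu, Matrix.conjTranspose_apply]

theorem ct_t (l z w : ℂ) :
    (((starRingEnd ℂ) l) ^ 2 • Ma + (starRingEnd ℂ) l • Mu z + Qm1 z w)ᴴ
      = -(l ^ 2 • Ma + l • Mu z + Qm1 z w) := by
  ext i j
  fin_cases i <;> fin_cases j <;>
    simp [Ma, Mu, Qm1, Matrix.conjTranspose_apply, Complex.conj_ofReal, div_eq_mul_inv] <;> ring

theorem IsFrame.hasDerivAt_x {q : ℝ → ℝ → ℂ} {E : ℝ → ℝ → ℂ → M2} (hE : IsFrame q E)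
    (x t : ℝ) (l : ℂ) :
    HasDerivAt (fun s => E s t l) (E x t l * (l • Ma + Mu (q x t))) x := by
  have h1 : ContDiff ℝ (⊤ : ℕ∞) (fun s : ℝ => E s t l) :=
    hE.smooth.comp ((contDiff_id.prodMk contDiff_const) :
      ContDiff ℝ (⊤ : ℕ∞) fun s : ℝ => (s, (t, l)))
  have h := ((h1.differentiable (by simp)).differentiableAt (x := x)).hasDerivAt
  have hl := hE.lax_x x t l
  unfold pdx at hl
  rwa [hl] at h

theorem IsFrame.hasDerivAt_t {q : ℝ → ℝ → ℂ} {E : ℝ → ℝ → ℂ → M2} (hE : IsFrame q E)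
    (x t : ℝ) (l : ℂ) :
    HasDerivAt (fun s => E x s l)
      (E x t l * ((l ^ 2) • Ma + l • Mu (q x t) + Qm1 (q x t) (pdx q x t))) t := by
  have h1 : ContDiff ℝ (⊤ : ℕ∞) (fun s : ℝ => E x s l) :=
    hE.smooth.comp ((contDiff_const.prodMk (contDiff_id.prodMk contDiff_const)) :
      ContDiff ℝ (⊤ : ℕ∞) fun s : ℝ => (x, (s, l)))
  have h := ((h1.differentiable (by simp)).differentiableAt (x := t)).hasDerivAt
  have hl := hE.lax_t x t l
  unfold pdt at hl
  rwa [hl] at h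

end Aux

/-- Two Pohlmeyer–Sym solutions built from two frames of the same NLS solution
differ by a rigid motion of ℝ³ ≅ su(2). -/
theorem statement2 (q : ℝ → ℝ → ℂ) (hq : IsSolNLS q)
    (E₁ E₂ : ℝ → ℝ → ℂ → Matrix (Fin 2) (Fin 2) ℂ)
    (hE₁ : IsFrame q E₁) (hE₂ : IsFrame q E₂)
    (hdet₁ : ∀ x t l, (E₁ x t l).det = 1) (hdet₂ : ∀ x t l, (E₂ x t l).det = 1)
    (γ₁ γ₂ : ℝ → ℝ → Matrix (Fin 2) (Fin 2) ℂ)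
    (hγ₁ : ∀ x t, γ₁ x t = deriv (fun l => E₁ x t l) 0 * (E₁ x t 0)⁻¹)
    (hγ₂ : ∀ x t, γ₂ x t = deriv (fun l => E₂ x t l) 0 * (E₂ x t 0)⁻¹) :
    ∃ (φ : Matrix (Fin 2) (Fin 2) ℂ) (v : Matrix (Fin 2) (Fin 2) ℂ),
      IsSU2 φ ∧ IsSU2alg v ∧
      ∀ x t, γ₂ x t = φ * γ₁ x t * φ⁻¹ + v := by
  have creal : ∀ l : ℂ, (starRingEnd ℂ) ((starRingEnd ℂ) l) = l := fun l => Complex.conj_conj l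
  -- right-sided reality
  have hr₁ : ∀ x t l, E₁ x t l * (E₁ x t ((starRingEnd ℂ) l))ᴴ = 1 :=
    fun x t l => mul_eq_one_comm.mp (hE₁.reality x t l)
  have hr₂ : ∀ x t l, E₂ x t l * (E₂ x t ((starRingEnd ℂ) l))ᴴ = 1 :=
    fun x t l => mul_eq_one_comm.mp (hE₂.reality x t l)
  -- constancy of E₂ (E₁^cl)ᴴ in (x,t)
  have key : ∀ (l : ℂ) (x t : ℝ),
      E₂ x t l * (E₁ x t ((starRingEnd ℂ) l))ᴴ = E₂ 0 0 l * (E₁ 0 0 ((starRingEnd ℂ) l))ᴴ := by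
    intro l
    set cl := (starRingEnd ℂ) l with hcl
    have hx : ∀ t x, HasDerivAt (fun s => E₂ s t l * (E₁ s t cl)ᴴ) 0 x := by
      intro t x
      have hp := (hE₂.hasDerivAt_x x t l).matMul ((hE₁.hasDerivAt_x x t cl).matCT)
      convert hp using 1
      rw [Matrix.conjTranspose_mul, hcl, ct_x]
      noncomm_ring
    have ht : ∀ x t, HasDerivAt (fun s => E₂ x s l * (E₁ x s cl)ᴴ) 0 t := by
      intro x t
      have hp := (hE₂.hasDerivAt_t x t l).matMul ((hE₁.hasDerivAt_t x t cl).matCT)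
      convert hp using 1
      rw [Matrix.conjTranspose_mul, hcl, ct_t]
      noncomm_ring
    intro x t
    have e1 : E₂ x t l * (E₁ x t cl)ᴴ = E₂ 0 t l * (E₁ 0 t cl)ᴴ :=
      is_const_of_deriv_eq_zero (fun s => ((hx t s).differentiableAt))
        (fun s => (hx t s).deriv) x 0
    have e2 : E₂ 0 t l * (E₁ 0 t cl)ᴴ = E₂ 0 0 l * (E₁ 0 0 cl)ᴴ :=
      is_const_of_deriv_eq_zero (fun s => ((ht 0 s).differentiableAt))
        (fun s => (ht 0 s).deriv) t 0
    exact e1.trans e2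
  -- invertibility facts
  have hU₁ : ∀ x t l, IsUnit (E₁ x t l).det := fun x t l => (hdet₁ x t l) ▸ isUnit_one
  have hinv₁ : ∀ x t l, (E₁ x t ((starRingEnd ℂ) l))ᴴ = (E₁ x t l)⁻¹ :=
    fun x t l => (Matrix.inv_eq_left_inv (hE₁.reality x t l)).symm
  have hadj₁ : ∀ x t l, (E₁ x t l)⁻¹ = (E₁ x t l).adjugate := by
    intro x t l
    apply Matrix.inv_eq_left_inv
    rw [Matrix.adjugate_mul, hdet₁, one_smul]
  set Φ : ℂ → Matrix (Fin 2) (Fin 2) ℂ :=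
    fun l => E₂ 0 0 l * (E₁ 0 0 ((starRingEnd ℂ) l))ᴴ with hΦdef
  have hrel : ∀ x t l, E₂ x t l = Φ l * E₁ x t l := by
    intro x t l
    calc E₂ x t l = E₂ x t l * ((E₁ x t ((starRingEnd ℂ) l))ᴴ * E₁ x t l) := by
          rw [hE₁.reality, mul_one]
      _ = (E₂ x t l * (E₁ x t ((starRingEnd ℂ) l))ᴴ) * E₁ x t l := by rw [Matrix.mul_assoc]
      _ = Φ l * E₁ x t l := by rw [key l x t]
  have hΦadj : ∀ l, Φ l = E₂ 0 0 l * (E₁ 0 0 l).adjugate := by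
    intro l
    show E₂ 0 0 l * (E₁ 0 0 ((starRingEnd ℂ) l))ᴴ = _
    rw [hinv₁, hadj₁]
  -- derivative of Φ at 0
  have h2d : HasDerivAt (fun l => E₂ 0 0 l) (deriv (fun l => E₂ 0 0 l) 0) 0 :=
    ((hE₂.holo 0 0) 0).hasDerivAt
  have h1d : HasDerivAt (fun l => E₁ 0 0 l) (deriv (fun l => E₁ 0 0 l) 0) 0 :=
    ((hE₁.holo 0 0) 0).hasDerivAt
  set vΦ : Matrix (Fin 2) (Fin 2) ℂ :=
    deriv (fun l => E₂ 0 0 l) 0 * (E₁ 0 0 0).adjugate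
      + E₂ 0 0 0 * (deriv (fun l => E₁ 0 0 l) 0).adjugate with hvΦdef
  have hΦd : HasDerivAt Φ vΦ 0 := by
    have h := h2d.matMul (h1d.matAdj)
    rw [show Φ = (fun l => E₂ 0 0 l * (E₁ 0 0 l).adjugate) from funext hΦadj]
    exact h
  set φ0 : Matrix (Fin 2) (Fin 2) ℂ := Φ 0 with hφ0def
  -- SU(2) for φ0
  have hreal00 : (E₂ 0 0 0)ᴴ * E₂ 0 0 0 = 1 := by
    have h := hE₂.reality 0 0 0
    rwa [map_zero] at h
  have h0 : Φ 0 = E₂ 0 0 0 * (E₁ 0 0 0)ᴴ := by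
    show E₂ 0 0 0 * (E₁ 0 0 ((starRingEnd ℂ) (0:ℂ)))ᴴ = _
    rw [map_zero]
  have hφ0H : φ0ᴴ * φ0 = 1 := by
    rw [hφ0def, h0]
    rw [Matrix.conjTranspose_mul, Matrix.conjTranspose_conjTranspose]
    rw [Matrix.mul_assoc, ← Matrix.mul_assoc ((E₂ 0 0 0)ᴴ), hreal00, Matrix.one_mul]
    have h := hr₁ 0 0 0
    rwa [map_zero] at h
  have hφ0det : φ0.det = 1 := by
    rw [hφ0def, h0]
    rw [Matrix.det_mul, Matrix.det_conjTranspose, hdet₂, hdet₁]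
    simp
  have hφ0inv : φ0⁻¹ = φ0ᴴ := Matrix.inv_eq_left_inv hφ0H
  have hφ0r : φ0 * φ0ᴴ = 1 := mul_eq_one_comm.mp hφ0H
  -- reality for Φ
  have hΦreal : ∀ l, (Φ ((starRingEnd ℂ) l))ᴴ * Φ l = 1 := by
    intro l
    show (E₂ 0 0 ((starRingEnd ℂ) l) * (E₁ 0 0 ((starRingEnd ℂ) ((starRingEnd ℂ) l)))ᴴ)ᴴ
        * (E₂ 0 0 l * (E₁ 0 0 ((starRingEnd ℂ) l))ᴴ) = 1
    rw [creal]
    rw [Matrix.conjTranspose_mul, Matrix.conjTranspose_conjTranspose]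
    rw [Matrix.mul_assoc, ← Matrix.mul_assoc ((E₂ 0 0 ((starRingEnd ℂ) l))ᴴ),
      hE₂.reality 0 0 l, Matrix.one_mul]
    exact hr₁ 0 0 l
  -- derivative of the reality relation
  have hΨd : HasDerivAt (fun l => (Φ ((starRingEnd ℂ) l))ᴴ) vΦᴴ 0 := by
    rw [hasDerivAt_matrix]
    intro i j
    simp only [Matrix.conjTranspose_apply]
    exact hasDerivAt_conj_conj (hasDerivAt_matrix.mp hΦd j i)
  have hrelreal : vΦᴴ * φ0 + φ0ᴴ * vΦ = 0 := by
    have h := hΨd.matMul hΦd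
    rw [show (fun l => (Φ ((starRingEnd ℂ) l))ᴴ * Φ l) = fun _ => (1 : Matrix (Fin 2) (Fin 2) ℂ)
      from funext hΦreal] at h
    have h0 : (Φ ((starRingEnd ℂ) (0:ℂ)))ᴴ = φ0ᴴ := by rw [map_zero, hφ0def]
    rw [h0] at h
    exact h.unique (hasDerivAt_const 0 1)
  set v : Matrix (Fin 2) (Fin 2) ℂ := vΦ * φ0⁻¹ with hvdef
  -- v is in su(2) : conjTranspose
  have hvct : vᴴ = -v := by
    rw [hvdef, hφ0inv, Matrix.conjTranspose_mul, Matrix.conjTranspose_conjTranspose]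
    have h1 : vΦᴴ * φ0 = -(φ0ᴴ * vΦ) := eq_neg_of_add_eq_zero_left hrelreal
    calc φ0 * vΦᴴ = φ0 * ((vΦᴴ * φ0) * φ0ᴴ) := by
          rw [Matrix.mul_assoc vΦᴴ, hφ0r, mul_one]
      _ = φ0 * (-(φ0ᴴ * vΦ) * φ0ᴴ) := by rw [h1]
      _ = -((φ0 * φ0ᴴ) * (vΦ * φ0ᴴ)) := by noncomm_ring
      _ = -(vΦ * φ0ᴴ) := by rw [hφ0r, Matrix.one_mul]
  -- v is in su(2) : trace
  have hΦdet : ∀ l, (Φ l).det = 1 := by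
    intro l
    show (E₂ 0 0 l * (E₁ 0 0 ((starRingEnd ℂ) l))ᴴ).det = 1
    rw [Matrix.det_mul, Matrix.det_conjTranspose, hdet₂, hdet₁]
    simp
  have hΦij : ∀ i j, HasDerivAt (fun l => Φ l i j) (vΦ i j) 0 := hasDerivAt_matrix.mp hΦd
  have hD : vΦ 0 0 * φ0 1 1 + φ0 0 0 * vΦ 1 1 - (vΦ 0 1 * φ0 1 0 + φ0 0 1 * vΦ 1 0) = 0 := by
    have h1 : HasDerivAt (fun l => (Φ l).det)
        (vΦ 0 0 * φ0 1 1 + φ0 0 0 * vΦ 1 1 - (vΦ 0 1 * φ0 1 0 + φ0 0 1 * vΦ 1 0)) 0 := by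
      simp only [Matrix.det_fin_two]
      exact ((hΦij 0 0).mul (hΦij 1 1)).sub ((hΦij 0 1).mul (hΦij 1 0))
    have h2 : HasDerivAt (fun l => (Φ l).det) 0 0 := by
      rw [show (fun l => (Φ l).det) = fun _ => (1 : ℂ) from funext hΦdet]
      exact hasDerivAt_const 0 1
    exact h1.unique h2
  have hφ0adj : φ0⁻¹ = φ0.adjugate := by
    apply Matrix.inv_eq_left_inv
    rw [Matrix.adjugate_mul, hφ0det, one_smul]
  have hvtr : v.trace = 0 := by
    rw [hvdef, hφ0adj, Matrix.adjugate_fin_two]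
    rw [Matrix.trace_fin_two]
    simp only [Matrix.mul_apply, Fin.sum_univ_two]
    simp [Matrix.cons_val', Matrix.cons_val_zero, Matrix.cons_val_one, Matrix.head_cons]
    linear_combination hD
  -- derivative of E₂ in λ and the final formula
  have hγ₂' : ∀ x t, γ₂ x t = v + φ0 * γ₁ x t * φ0⁻¹ := by
    intro x t
    have h1 := ((hE₁.holo x t) 0).hasDerivAt
    have hE2d : HasDerivAt (fun l => E₂ x t l)
        (vΦ * E₁ x t 0 + φ0 * deriv (fun l => E₁ x t l) 0) 0 := by
      rw [show (fun l => E₂ x t l) = fun l => Φ l * E₁ x t l from funext (hrel x t)]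
      exact hΦd.matMul h1
    have hE1inv : E₁ x t 0 * (E₁ x t 0)⁻¹ = 1 := Matrix.mul_nonsing_inv _ (hU₁ x t 0)
    have hd : deriv (fun l => E₂ x t l) 0 = vΦ * E₁ x t 0 + φ0 * deriv (fun l => E₁ x t l) 0 :=
      hE2d.deriv
    rw [hγ₂ x t, hd, hγ₁ x t, hrel x t 0, Matrix.mul_inv_rev, hvdef]
    rw [Matrix.add_mul]
    congr 1
    · rw [Matrix.mul_assoc vΦ, ← Matrix.mul_assoc (E₁ x t 0), hE1inv, Matrix.one_mul]
    · simp only [Matrix.mul_assoc]; rfl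
  refine ⟨φ0, v, ⟨hφ0H, hφ0det⟩, ⟨hvct, hvtr⟩, fun x t => by rw [hγ₂' x t, add_comm]⟩
end
end

section
/- Let q : ℝ² → ℝ be a smooth solution of the KdV equation q_t = (1/4)(q_xxx - 6qq_x), let c ∈ ℝ, and let y = (y₁,y₂)ᵗ : ℝ² → ℝ² be a smooth solution of the linear system (9.10): y_x = -[[c, q],[1, -c]] y, y_t = -[[c³ - (c/2)q + (1/4)q_x, c²q - (c/2)q_x + (1/4)(q_xx - 2q²)],[c² - (1/2)q, -c³ + (c/2)q - (1/4)q_x]] y. Suppose y₂(x,t) ≠ 0 for all (x,t), and set ξ̃ = c - y₁/y₂. Then q̃ = -q + 2(ξ̃² - c²) is a smooth solution of the KdV equation. -/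
open Matrix

noncomputable section

attribute [local instance] Matrix.normedAddCommGroup Matrix.normedSpace

/-- The KdV equation `q_t = (1/4)(q_xxx - 6qq_x)`. -/
def IsSolKdV (q : ℝ → ℝ → ℝ) : Prop :=
  Smooth2 q ∧ ∀ x t, pdt q x t = (1/4 : ℝ) * (pdx (pdx (pdx q)) x t - 6 * q x t * pdx q x t)

section Helpers

variable {V : Type*} [NormedAddCommGroup V] [NormedSpace ℝ V]

lemma Smooth2.hasDerivAt_x {f : ℝ → ℝ → V} (hf : Smooth2 f) (x t : ℝ) :
    HasDerivAt (fun s => f s t) (pdx f x t) x := by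
  have hd : Differentiable ℝ (fun p : ℝ × ℝ => f p.1 p.2) := hf.differentiable (by simp)
  have h : DifferentiableAt ℝ (fun s : ℝ => f s t) x :=
    (hd.comp (differentiable_id.prodMk (differentiable_const t))) x
  exact h.hasDerivAt

lemma Smooth2.hasDerivAt_t {f : ℝ → ℝ → V} (hf : Smooth2 f) (x t : ℝ) :
    HasDerivAt (fun s => f x s) (pdt f x t) t := by
  have hd : Differentiable ℝ (fun p : ℝ × ℝ => f p.1 p.2) := hf.differentiable (by simp)
  have h : DifferentiableAt ℝ (fun s : ℝ => f x s) t :=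
    (hd.comp ((differentiable_const x).prodMk differentiable_id)) t
  exact h.hasDerivAt

lemma Smooth2.pdx' {f : ℝ → ℝ → V} (hf : Smooth2 f) : Smooth2 (pdx f) := by
  have hF : ContDiff ℝ (⊤ : ℕ∞) (fun p : ℝ × ℝ => f p.1 p.2) := hf
  have key : ∀ x t : ℝ, pdx f x t = fderiv ℝ (fun p : ℝ × ℝ => f p.1 p.2) (x, t) ((1:ℝ), (0:ℝ)) := by
    intro x t
    have hFd : HasFDerivAt (fun p : ℝ × ℝ => f p.1 p.2)
        (fderiv ℝ (fun p : ℝ × ℝ => f p.1 p.2) (x, t)) (x, t) :=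
      ((hF.differentiable (by simp)) (x, t)).hasFDerivAt
    have hg : HasDerivAt (fun s : ℝ => (s, t)) ((1:ℝ), (0:ℝ)) x :=
      (hasDerivAt_id x).prodMk (hasDerivAt_const x t)
    exact (hFd.comp_hasDerivAt x hg).deriv
  have h1 : ContDiff ℝ (⊤ : ℕ∞) (fun p : ℝ × ℝ => fderiv ℝ (fun p : ℝ × ℝ => f p.1 p.2) p) :=
    hF.fderiv_right (by simp)
  have h2 : ContDiff ℝ (⊤ : ℕ∞) (fun p : ℝ × ℝ => fderiv ℝ (fun p : ℝ × ℝ => f p.1 p.2) p ((1:ℝ), (0:ℝ))) :=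
    h1.clm_apply contDiff_const
  have heq : (fun p : ℝ × ℝ => pdx f p.1 p.2)
      = fun p : ℝ × ℝ => fderiv ℝ (fun p : ℝ × ℝ => f p.1 p.2) p ((1:ℝ), (0:ℝ)) :=
    funext fun p => key p.1 p.2
  rw [Smooth2, heq]
  exact h2

lemma kdv_aux (q ξ : ℝ → ℝ → ℝ) (hq : IsSolKdV q) (c : ℝ) (hξsm : Smooth2 ξ)
    (hξx : ∀ x t, HasDerivAt (fun s => ξ s t) (q x t + c^2 - ξ x t^2) x)
    (hξt : ∀ x t, HasDerivAt (fun s => ξ x s)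
      (-((c^2 - q x t/2)*(c - ξ x t)^2
         - 2*(c^3 - (c/2)*q x t + (1/4)*pdx q x t)*(c - ξ x t)
         - (c^2*q x t - (c/2)*pdx q x t + (1/4)*(pdx (pdx q) x t - 2*(q x t)^2)))) t) :
    IsSolKdV (fun x t => -q x t + 2*((ξ x t)^2 - c^2)) := by
  have hq1 : Smooth2 q := hq.1
  have hs1 : Smooth2 (pdx q) := hq1.pdx'
  have hs2 : Smooth2 (pdx (pdx q)) := hs1.pdx'
  have Hq : ∀ x t, HasDerivAt (fun s => q s t) (pdx q x t) x :=
    fun x t => hq1.hasDerivAt_x x t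
  have Hp : ∀ x t, HasDerivAt (fun s => pdx q s t) (pdx (pdx q) x t) x :=
    fun x t => hs1.hasDerivAt_x x t
  have Hr : ∀ x t, HasDerivAt (fun s => pdx (pdx q) s t) (pdx (pdx (pdx q)) x t) x :=
    fun x t => hs2.hasDerivAt_x x t
  have Hqt : ∀ x t, HasDerivAt (fun s => q x s) (pdt q x t) t :=
    fun x t => hq1.hasDerivAt_t x t
  have hA : ∀ x t, HasDerivAt (fun s => q s t + c^2 - ξ s t^2)
      (pdx q x t - 2*ξ x t*(q x t + c^2 - ξ x t^2)) x := by
    intro x t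
    have h := ((Hq x t).add_const (c^2)).sub ((hξx x t).pow 2)
    exact h.congr_deriv (by ring)
  have pQx : ∀ x t, pdx (fun x t => -q x t + 2*((ξ x t)^2 - c^2)) x t
      = -pdx q x t + 4*ξ x t*(q x t + c^2 - ξ x t^2) := by
    intro x t
    have h := ((Hq x t).neg).add ((((hξx x t).pow 2).sub_const (c^2)).const_mul 2)
    refine HasDerivAt.deriv ?_
    exact h.congr_deriv (by ring)
  have HP1 : ∀ x t, HasDerivAt (fun s => -pdx q s t + 4*ξ s t*(q s t + c^2 - ξ s t^2))
      (-pdx (pdx q) x t + 4*(q x t + c^2 - ξ x t^2)^2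
        + 4*ξ x t*(pdx q x t - 2*ξ x t*(q x t + c^2 - ξ x t^2))) x := by
    intro x t
    have h := ((Hp x t).neg).add (((hξx x t).const_mul 4).mul
      (((Hq x t).add_const (c^2)).sub ((hξx x t).pow 2)))
    exact h.congr_deriv (by simp only [Pi.sub_apply, Pi.pow_apply]; ring)
  have pQxx : ∀ x t, pdx (pdx (fun x t => -q x t + 2*((ξ x t)^2 - c^2))) x t
      = -pdx (pdx q) x t + 4*(q x t + c^2 - ξ x t^2)^2
        + 4*ξ x t*(pdx q x t - 2*ξ x t*(q x t + c^2 - ξ x t^2)) := by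
    intro x t
    have heq : (fun s => pdx (fun x t => -q x t + 2*((ξ x t)^2 - c^2)) s t)
        = fun s => -pdx q s t + 4*ξ s t*(q s t + c^2 - ξ s t^2) :=
      funext fun s => pQx s t
    show deriv (fun s => pdx (fun x t => -q x t + 2*((ξ x t)^2 - c^2)) s t) x = _
    rw [heq]
    exact (HP1 x t).deriv
  have HP2 : ∀ x t, HasDerivAt (fun s => -pdx (pdx q) s t + 4*(q s t + c^2 - ξ s t^2)^2
        + 4*ξ s t*(pdx q s t - 2*ξ s t*(q s t + c^2 - ξ s t^2)))
      (-pdx (pdx (pdx q)) x t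
        + 12*(q x t + c^2 - ξ x t^2)*(pdx q x t - 2*ξ x t*(q x t + c^2 - ξ x t^2))
        + 4*ξ x t*(pdx (pdx q) x t - 2*(q x t + c^2 - ξ x t^2)^2
            - 2*ξ x t*(pdx q x t - 2*ξ x t*(q x t + c^2 - ξ x t^2)))) x := by
    intro x t
    have hinner : HasDerivAt (fun s => pdx q s t - 2*ξ s t*(q s t + c^2 - ξ s t^2))
        (pdx (pdx q) x t - (2*(q x t + c^2 - ξ x t^2)*(q x t + c^2 - ξ x t^2)
          + 2*ξ x t*(pdx q x t - 2*ξ x t*(q x t + c^2 - ξ x t^2)))) x := by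
      have h := (Hp x t).sub (((hξx x t).const_mul 2).mul (hA x t))
      exact h.congr_deriv (by ring)
    have h := (((Hr x t).neg).add ((hA x t).pow 2 |>.const_mul 4)).add
      (((hξx x t).const_mul 4).mul hinner)
    exact h.congr_deriv (by ring)
  have pQxxx : ∀ x t, pdx (pdx (pdx (fun x t => -q x t + 2*((ξ x t)^2 - c^2)))) x t
      = -pdx (pdx (pdx q)) x t
        + 12*(q x t + c^2 - ξ x t^2)*(pdx q x t - 2*ξ x t*(q x t + c^2 - ξ x t^2))
        + 4*ξ x t*(pdx (pdx q) x t - 2*(q x t + c^2 - ξ x t^2)^2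
            - 2*ξ x t*(pdx q x t - 2*ξ x t*(q x t + c^2 - ξ x t^2))) := by
    intro x t
    have heq : (fun s => pdx (pdx (fun x t => -q x t + 2*((ξ x t)^2 - c^2))) s t)
        = fun s => -pdx (pdx q) s t + 4*(q s t + c^2 - ξ s t^2)^2
          + 4*ξ s t*(pdx q s t - 2*ξ s t*(q s t + c^2 - ξ s t^2)) :=
      funext fun s => pQxx s t
    show deriv (fun s => pdx (pdx (fun x t => -q x t + 2*((ξ x t)^2 - c^2))) s t) x = _
    rw [heq]
    exact (HP2 x t).deriv
  have pQt : ∀ x t, pdt (fun x t => -q x t + 2*((ξ x t)^2 - c^2)) x t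
      = -pdt q x t + 4*ξ x t*
        (-((c^2 - q x t/2)*(c - ξ x t)^2
           - 2*(c^3 - (c/2)*q x t + (1/4)*pdx q x t)*(c - ξ x t)
           - (c^2*q x t - (c/2)*pdx q x t + (1/4)*(pdx (pdx q) x t - 2*(q x t)^2)))) := by
    intro x t
    have h := ((Hqt x t).neg).add ((((hξt x t).pow 2).sub_const (c^2)).const_mul 2)
    refine HasDerivAt.deriv ?_
    exact h.congr_deriv (by ring)
  constructor
  · exact hq1.neg.add (contDiff_const.mul ((hξsm.pow 2).sub contDiff_const))
  · intro x t
    rw [pQt x t, pQxxx x t, pQx x t, hq.2 x t]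
    ring

end Helpers

/-- Bäcklund transformation for the KdV via the linear system (9.10). -/
theorem statement19 (q : ℝ → ℝ → ℝ) (hq : IsSolKdV q) (c : ℝ)
    (y : ℝ → ℝ → Fin 2 → ℝ) (hysm : Smooth2 y)
    (hyx : ∀ x t, pdx y x t = -(!![c, q x t; 1, -c]) *ᵥ y x t)
    (hyt : ∀ x t, pdt y x t =
      -(!![c ^ 3 - (c / 2) * q x t + (1/4 : ℝ) * pdx q x t,
             c ^ 2 * q x t - (c / 2) * pdx q x t + (1/4 : ℝ) * (pdx (pdx q) x t - 2 * (q x t) ^ 2);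
           c ^ 2 - (1/2 : ℝ) * q x t,
             -c ^ 3 + (c / 2) * q x t - (1/4 : ℝ) * pdx q x t]) *ᵥ y x t)
    (hy₂ : ∀ x t, y x t 1 ≠ 0) :
    IsSolKdV (fun x t => -q x t + 2 * ((c - y x t 0 / y x t 1) ^ 2 - c ^ 2)) := by
  have hy0 : Smooth2 (fun a b => y a b 0) :=
    (ContinuousLinearMap.proj (R := ℝ) (φ := fun _ : Fin 2 => ℝ) 0).contDiff.comp hysm
  have hy1 : Smooth2 (fun a b => y a b 1) :=
    (ContinuousLinearMap.proj (R := ℝ) (φ := fun _ : Fin 2 => ℝ) 1).contDiff.comp hysm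
  have hξsm : Smooth2 (fun a b => c - y a b 0 / y a b 1) :=
    contDiff_const.sub (hy0.div hy1 fun p => hy₂ p.1 p.2)
  have hξx : ∀ x t, HasDerivAt (fun s => c - y s t 0 / y s t 1)
      (q x t + c^2 - (c - y x t 0 / y x t 1)^2) x := by
    intro x t
    have h := hysm.hasDerivAt_x x t
    have h0 : HasDerivAt (fun s => y s t 0) (-(c * y x t 0 + q x t * y x t 1)) x := by
      have := (hasDerivAt_pi.mp h) 0
      refine this.congr_deriv ?_
      rw [hyx]
      simp [Matrix.mulVec, dotProduct, Fin.sum_univ_two]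
      try ring
    have h1 : HasDerivAt (fun s => y s t 1) (-(y x t 0 - c * y x t 1)) x := by
      have := (hasDerivAt_pi.mp h) 1
      refine this.congr_deriv ?_
      rw [hyx]
      simp [Matrix.mulVec, dotProduct, Fin.sum_univ_two]
      try ring
    have hd := (hasDerivAt_const x c).sub (h0.div h1 (hy₂ x t))
    refine hd.congr_deriv ?_
    have hne := hy₂ x t
    field_simp
    ring
  have hξt : ∀ x t, HasDerivAt (fun s => c - y x s 0 / y x s 1)
      (-((c^2 - q x t/2)*(c - (c - y x t 0 / y x t 1))^2
         - 2*(c^3 - (c/2)*q x t + (1/4)*pdx q x t)*(c - (c - y x t 0 / y x t 1))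
         - (c^2*q x t - (c/2)*pdx q x t
            + (1/4)*(pdx (pdx q) x t - 2*(q x t)^2)))) t := by
    intro x t
    have h := hysm.hasDerivAt_t x t
    have h0 : HasDerivAt (fun s => y x s 0)
        (-((c ^ 3 - (c / 2) * q x t + (1/4 : ℝ) * pdx q x t) * y x t 0
          + (c ^ 2 * q x t - (c / 2) * pdx q x t
             + (1/4 : ℝ) * (pdx (pdx q) x t - 2 * (q x t) ^ 2)) * y x t 1)) t := by
      have := (hasDerivAt_pi.mp h) 0
      refine this.congr_deriv ?_
      rw [hyt]
      simp [Matrix.mulVec, dotProduct, Fin.sum_univ_two]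
      try ring
    have h1 : HasDerivAt (fun s => y x s 1)
        (-((c ^ 2 - (1/2 : ℝ) * q x t) * y x t 0
          + (-c ^ 3 + (c / 2) * q x t - (1/4 : ℝ) * pdx q x t) * y x t 1)) t := by
      have := (hasDerivAt_pi.mp h) 1
      refine this.congr_deriv ?_
      rw [hyt]
      simp [Matrix.mulVec, dotProduct, Fin.sum_univ_two]
      try ring
    have hd := (hasDerivAt_const t c).sub (h0.div h1 (hy₂ x t))
    refine hd.congr_deriv ?_
    have hne := hy₂ x t
    field_simp
    ring
  exact kdv_aux q (fun a b => c - y a b 0 / y a b 1) hq c hξsm hξx hξt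
end
end
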